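/- Let X ⊆ ℝ^d be complete and let A, B ∈ 𝒦(X). Then (convexHull ℝ (A ∪ B)) ∩ X = (convexHull ℝ ((A ∩ X) ∪ (B ∩ X))) ∩ X. -/

import Mathlib

/-- The point-generated convex lattice `𝒦(X)`. -/
inductive PtLattice {d : ℕ} (X : Set (Fin d → ℝ)) : Set (Fin d → ℝ) → Prop
  | single {x : Fin d → ℝ} (hx : x ∈ X) : PtLattice X {x}
  | inter {A B : Set (Fin d → ℝ)} : PtLattice X A → PtLattice X B → PtLattice X (A ∩ B)
  | join {A B : Set (Fin d → ℝ)} : PtLattice X A → PtLattice X B →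
      PtLattice X (convexHull ℝ (A ∪ B))

/-!
Every member of `𝒦(X)` is the convex hull of a finite subset of `X`, which gives the equality at
once. Along the inductive construction only intersections need an argument. If `A = conv S` and
`B = conv T` with `S, T` finite, the compact convex set `A ∩ B` is the hull of its extreme points
(Krein–Milman). At an extreme point `x` the smallest faces of `A` and of `B` containing `x` meet
only in `x`; these faces are the hulls of the points of `S`, resp. `T`, lying in them, so
`{x} ∈ 𝒦(X)` and `x ∈ X` by completeness. The two subsets of `S` and `T` determine `x`, so there
are finitely many extreme points.
-/

open Set

section MinFace

variable {E : Type*} [AddCommGroup E] [Module ℝ E] {A B S T : Set E} {x y : E}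

/-- The smallest face of a convex set `A` containing `x ∈ A`. -/
def minFace (A : Set E) (x : E) : Set E :=
  {y | y ∈ A ∧ ∃ t : ℝ, 0 < t ∧ x + t • (x - y) ∈ A}

lemma minFace_subset : minFace A x ⊆ A := fun _ hy => hy.1

lemma self_mem_minFace (hx : x ∈ A) : x ∈ minFace A x :=
  ⟨hx, 1, one_pos, by simpa⟩

lemma mem_openSegment_add_smul_sub {t : ℝ} (ht : 0 < t) :
    x ∈ openSegment ℝ y (x + t • (x - y)) :=
  ⟨t / (1 + t), 1 / (1 + t), by positivity, by positivity, by field_simp; ring, by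
    match_scalars <;> field_simp; ring⟩

lemma Convex.add_smul_mem_of_le (hA : Convex ℝ A) (hx : x ∈ A) {v : E} {s t : ℝ}
    (hv : x + t • v ∈ A) (hs : 0 ≤ s) (hst : s ≤ t) : x + s • v ∈ A := by
  rcases hs.eq_or_lt with rfl | hs
  · simpa using hx
  have ht : 0 < t := hs.trans_le hst
  have := hA.add_smul_mem hx hv ⟨div_nonneg hs.le ht.le, div_le_one_of_le₀ hst ht.le⟩
  rwa [smul_smul, div_mul_cancel₀ s ht.ne'] at this

lemma Convex.convex_minFace (hA : Convex ℝ A) (hx : x ∈ A) : Convex ℝ (minFace A x) := by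
  rintro y₁ ⟨hy₁, t₁, ht₁, h₁⟩ y₂ ⟨hy₂, t₂, ht₂, h₂⟩ a b ha hb hab
  have ht : 0 < min t₁ t₂ := lt_min ht₁ ht₂
  have h₁' := hA.add_smul_mem_of_le hx h₁ ht.le (min_le_left _ _)
  have h₂' := hA.add_smul_mem_of_le hx h₂ ht.le (min_le_right _ _)
  refine ⟨hA hy₁ hy₂ ha hb hab, min t₁ t₂, ht, ?_⟩
  convert hA h₁' h₂' ha hb hab using 1
  obtain rfl : b = 1 - a := by linarith
  module

lemma Convex.isExtreme_minFace (hA : Convex ℝ A) : IsExtreme ℝ A (minFace A x) := by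
  refine ⟨minFace_subset, ?_⟩
  rintro y₁ hy₁ y₂ hy₂ _ ⟨-, s, hs, hw⟩ ⟨a, b, ha, hb, hab, rfl⟩
  refine ⟨hy₁, s * a / (1 + s * b), by positivity, ?_⟩
  -- the new point is a convex combination of `y₂` and the given prolongation point
  convert hA hw hy₂ (a := 1 / (1 + s * b)) (b := s * b / (1 + s * b)) (by positivity)
    (by positivity) (by field_simp) using 1
  obtain rfl : b = 1 - a := by linarith
  match_scalars <;> field_simp <;> ring

lemma minFace_inter_subset (hA : Convex ℝ A) (hB : Convex ℝ B) (hx : x ∈ A ∩ B) :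
    minFace A x ∩ minFace B x ⊆ minFace (A ∩ B) x := by
  rintro y ⟨⟨hyA, t₁, ht₁, h₁⟩, ⟨hyB, t₂, ht₂, h₂⟩⟩
  have ht : 0 < min t₁ t₂ := lt_min ht₁ ht₂
  exact ⟨⟨hyA, hyB⟩, min t₁ t₂, ht, hA.add_smul_mem_of_le hx.1 h₁ ht.le (min_le_left _ _),
    hB.add_smul_mem_of_le hx.2 h₂ ht.le (min_le_right _ _)⟩

lemma minFace_subset_singleton (hx : x ∈ A.extremePoints ℝ) : minFace A x ⊆ {x} :=
  fun _ ⟨hy, _, ht, h⟩ => hx.2 hy h (mem_openSegment_add_smul_sub ht)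

lemma IsExtreme.subset_convexHull_inter {F : Set E} (hF : IsExtreme ℝ (convexHull ℝ S) F) :
    F ⊆ convexHull ℝ (F ∩ S) := by
  let G := {x | x ∈ convexHull ℝ S ∧ (x ∈ F → x ∈ convexHull ℝ (F ∩ S))}
  have hSG : S ⊆ G := fun s hs =>
    ⟨subset_convexHull ℝ S hs, fun hsF => subset_convexHull ℝ _ ⟨hsF, hs⟩⟩
  have hG : Convex ℝ G := by
    refine convex_iff_openSegment_subset.2 fun y₁ ⟨h₁, hy₁⟩ y₂ ⟨h₂, hy₂⟩ w hw => ?_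
    refine ⟨convex_convexHull ℝ S |>.openSegment_subset h₁ h₂ hw, fun hwF => ?_⟩
    exact convex_convexHull ℝ _ |>.openSegment_subset (hy₁ (hF.2 h₁ h₂ hwF hw))
      (hy₂ (hF.right_mem_of_mem_openSegment h₁ h₂ hwF hw)) hw
  exact fun x hx => (convexHull_min hSG hG (hF.1 hx)).2 hx

lemma minFace_convexHull (hx : x ∈ convexHull ℝ S) :
    minFace (convexHull ℝ S) x = convexHull ℝ (minFace (convexHull ℝ S) x ∩ S) :=
  (convex_convexHull ℝ S).isExtreme_minFace.subset_convexHull_inter.antisymm <|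
    convexHull_min inter_subset_left ((convex_convexHull ℝ S).convex_minFace hx)

lemma convexHull_minFace_inter_convexHull_minFace
    (hx : x ∈ (convexHull ℝ S ∩ convexHull ℝ T).extremePoints ℝ) :
    convexHull ℝ (minFace (convexHull ℝ S) x ∩ S) ∩
      convexHull ℝ (minFace (convexHull ℝ T) x ∩ T) = {x} := by
  obtain ⟨hxS, hxT⟩ := hx.1
  rw [← minFace_convexHull hxS, ← minFace_convexHull hxT]
  refine (minFace_inter_subset (convex_convexHull ℝ S) (convex_convexHull ℝ T) hx.1 |>.trans
    (minFace_subset_singleton hx)).antisymm ?_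
  exact singleton_subset_iff.2 ⟨self_mem_minFace hxS, self_mem_minFace hxT⟩

lemma finite_extremePoints_convexHull_inter_convexHull (hS : S.Finite) (hT : T.Finite) :
    ((convexHull ℝ S ∩ convexHull ℝ T).extremePoints ℝ).Finite := by
  let f (x : E) : Set E × Set E :=
    (minFace (convexHull ℝ S) x ∩ S, minFace (convexHull ℝ T) x ∩ T)
  refine Finite.of_finite_image (f := f) ((hS.finite_subsets.prod hT.finite_subsets).subset ?_) ?_
  · rintro _ ⟨x, -, rfl⟩
    exact ⟨inter_subset_right, inter_subset_right⟩
  · have key (z) (hz : z ∈ (convexHull ℝ S ∩ convexHull ℝ T).extremePoints ℝ) :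
        convexHull ℝ (f z).1 ∩ convexHull ℝ (f z).2 = {z} :=
      convexHull_minFace_inter_convexHull_minFace hz
    intro x hx y hy hxy
    rw [← singleton_eq_singleton_iff, ← key x hx, ← key y hy, hxy]

end MinFace

lemma IsCompact.convexHull_extremePoints_eq {E : Type*} [NormedAddCommGroup E] [NormedSpace ℝ E]
    {K : Set E} (hK : IsCompact K) (hKc : Convex ℝ K) (hfin : (K.extremePoints ℝ).Finite) :
    convexHull ℝ (K.extremePoints ℝ) = K := by
  rw [← (hfin.isClosed_convexHull ℝ).closure_eq, closure_convexHull_extremePoints hK hKc]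

section PtLattice

variable {d : ℕ} {X : Set (Fin d → ℝ)}

lemma ptLattice_convexHull {V : Set (Fin d → ℝ)} (hV : V.Finite) (hne : V.Nonempty)
    (hVX : V ⊆ X) : PtLattice X (convexHull ℝ V) := by
  induction V, hV using Set.Finite.induction_on with
  | empty => exact absurd hne not_nonempty_empty
  | @insert a V _ _ ih =>
    rcases V.eq_empty_or_nonempty with rfl | hV
    · rw [insert_empty_eq, convexHull_singleton]
      exact .single (hVX (mem_insert a ∅))
    rw [insert_eq, ← convexHull_convexHull_union_right]
    exact .join (.single (hVX (mem_insert a V))) (ih hV ((subset_insert a V).trans hVX))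

lemma mem_of_mem_extremePoints_convexHull_inter_convexHull
    (hX : ∀ x : Fin d → ℝ, PtLattice X {x} → x ∈ X) {S T : Set (Fin d → ℝ)} {x : Fin d → ℝ}
    (hS : S.Finite) (hSX : S ⊆ X) (hT : T.Finite) (hTX : T ⊆ X)
    (hx : x ∈ (convexHull ℝ S ∩ convexHull ℝ T).extremePoints ℝ) : x ∈ X := by
  have h := convexHull_minFace_inter_convexHull_minFace hx
  have hxST : x ∈ _ ∩ _ := h ▸ mem_singleton x
  exact hX x (h ▸ .inter
    (ptLattice_convexHull (hS.subset inter_subset_right) (convexHull_nonempty_iff.1 ⟨x, hxST.1⟩)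
      (inter_subset_right.trans hSX))
    (ptLattice_convexHull (hT.subset inter_subset_right) (convexHull_nonempty_iff.1 ⟨x, hxST.2⟩)
      (inter_subset_right.trans hTX)))

lemma PtLattice.exists_finite_subset_eq_convexHull
    (hX : ∀ x : Fin d → ℝ, PtLattice X {x} → x ∈ X) {C : Set (Fin d → ℝ)} (hC : PtLattice X C) :
    ∃ V ⊆ X, V.Finite ∧ C = convexHull ℝ V := by
  induction hC with
  | @single x hx => exact ⟨{x}, singleton_subset_iff.2 hx, finite_singleton x,
      (convexHull_singleton x).symm⟩
  | inter _ _ ihA ihB =>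
    obtain ⟨S, hSX, hS, rfl⟩ := ihA
    obtain ⟨T, hTX, hT, rfl⟩ := ihB
    have hK : IsCompact (convexHull ℝ S ∩ convexHull ℝ T) :=
      (hS.isCompact_convexHull ℝ).inter_right (hT.isClosed_convexHull ℝ)
    have hfin := finite_extremePoints_convexHull_inter_convexHull hS hT
    exact ⟨_, fun x hx => mem_of_mem_extremePoints_convexHull_inter_convexHull hX hS hSX hT hTX hx,
      hfin, (hK.convexHull_extremePoints_eq
        ((convex_convexHull ℝ S).inter (convex_convexHull ℝ T)) hfin).symm⟩
  | join _ _ ihA ihB =>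
    obtain ⟨S, hSX, hS, rfl⟩ := ihA
    obtain ⟨T, hTX, hT, rfl⟩ := ihB
    exact ⟨S ∪ T, union_subset hSX hTX, hS.union hT, by
      rw [convexHull_convexHull_union_left, convexHull_convexHull_union_right]⟩

end PtLattice

/-- For complete `X` and `A, B ∈ 𝒦(X)`,
`(convexHull ℝ (A ∪ B)) ∩ X = (convexHull ℝ ((A ∩ X) ∪ (B ∩ X))) ∩ X`. -/
theorem join_inter_eq_of_complete (d : ℕ) (X : Set (Fin d → ℝ))
    (hX : ∀ x : Fin d → ℝ, PtLattice X {x} → x ∈ X)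
    (A B : Set (Fin d → ℝ)) (hA : PtLattice X A) (hB : PtLattice X B) :
    convexHull ℝ (A ∪ B) ∩ X = convexHull ℝ ((A ∩ X) ∪ (B ∩ X)) ∩ X := by
  obtain ⟨S, hSX, -, rfl⟩ := hA.exists_finite_subset_eq_convexHull hX
  obtain ⟨T, hTX, -, rfl⟩ := hB.exists_finite_subset_eq_convexHull hX
  congr 1
  refine Subset.antisymm ?_
    (convexHull_mono (union_subset_union inter_subset_left inter_subset_left))
  rw [convexHull_convexHull_union_left, convexHull_convexHull_union_right]
  exact convexHull_mono (union_subset_union (subset_inter (subset_convexHull ℝ S) hSX)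
    (subset_inter (subset_convexHull ℝ T) hTX))
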